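/- A topological group that is the union of countably many G_δ-complete subgroups is itself G_δ-complete. -/

import Mathlib

/-- The topology generated by the `G_δ`-subsets of `(G, t)`. -/
def gdeltaTopology {G : Type*} (t : TopologicalSpace G) : TopologicalSpace G :=
  TopologicalSpace.generateFrom
    {s : Set G | ∃ f : ℕ → Set G, (∀ n, @IsOpen G t (f n)) ∧ s = ⋂ n, f n}

/-- A topological group is Raïkov-complete if every filter which is Cauchy with
respect to the two-sided (upper) uniformity — i.e. admits arbitrarily small sets
for both the left and the right uniformity — converges. -/
def RaikovComplete (G : Type*) [Group G] [TopologicalSpace G] : Prop :=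
  ∀ F : Filter G, F.NeBot →
    (∀ U ∈ nhds (1 : G), ∃ S ∈ F, ∀ x ∈ S, ∀ y ∈ S, x * y⁻¹ ∈ U ∧ x⁻¹ * y ∈ U) →
    ∃ x : G, F ≤ nhds x

/-- A topological group `(G, t)` is `G_δ`-complete if `G` equipped with the topology
generated by `G_δ`-sets is Raïkov-complete. -/
def GDeltaComplete (G : Type*) [Group G] [t : TopologicalSpace G] : Prop :=
  @RaikovComplete G _ (gdeltaTopology t)

/-!
The `G_δ`-modification of a topological group is again a topological group, and its neighbourhood
filters are the countable-intersection filters generated by the original ones; moreover it commutes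
with passing to subspaces. So it suffices to show that a topological group whose neighbourhood
filter of `1` is closed under countable intersections, and which is covered by countably many
Raïkov-complete subgroups `H n`, is Raïkov-complete.

Given a two-sided Cauchy filter `F`, its thickening `F' = F * 𝓝 1 ⊓ 𝓝 1 * F` is still Cauchy and
coarser than `F`. Countably many sets of `F'` always intersect in a set of `F`, so `F'` cannot
avoid every `H n`. Its trace on such an `H n` is Cauchy there, hence converges to some `h ∈ H n`;
then `h` is a cluster point of the Cauchy filter `F'`, so `F ≤ F' ≤ 𝓝 h`.
-/

open Set Filter Topology TopologicalSpace Pointwise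

namespace Filter

variable {α β : Type*}

theorem countableGenerate_sets_le (l : Filter α) : countableGenerate l.sets ≤ l :=
  fun _ hs => mem_countableGenerate_iff.2 ⟨{_}, singleton_subset_iff.2 hs, countable_singleton _,
    by simp⟩

theorem le_countableGenerate_sets_iff {f l : Filter α} [CountableInterFilter f] :
    f ≤ countableGenerate l.sets ↔ f ≤ l :=
  le_countableGenerate_iff_of_countableInterFilter

instance countableInterFilter_prod (f : Filter α) (g : Filter β) [CountableInterFilter f]
    [CountableInterFilter g] : CountableInterFilter (f ×ˢ g) :=
  inferInstanceAs (CountableInterFilter (f.comap Prod.fst ⊓ g.comap Prod.snd))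

theorem comap_countableGenerate_sets (m : α → β) (l : Filter β) :
    comap m (countableGenerate l.sets) = countableGenerate (comap m l).sets := by
  refine le_antisymm (le_countableGenerate_sets_iff.2 (comap_mono (countableGenerate_sets_le l)))
    (map_le_iff_le_comap.1 (le_countableGenerate_sets_iff.2 ?_))
  exact (map_mono (countableGenerate_sets_le _)).trans map_comap_le

end Filter

section GDelta

variable {X Y : Type*} (t : TopologicalSpace X)

theorem gdeltaTopology_eq_generateFrom_isGδ :
    gdeltaTopology t = generateFrom {s | IsGδ s} := by
  simp only [gdeltaTopology, isGδ_iff_eq_iInter_nat]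

theorem nhds_gdeltaTopology (x : X) :
    @nhds X (gdeltaTopology t) x = countableGenerate (𝓝 x).sets := by
  rw [gdeltaTopology_eq_generateFrom_isGδ]
  refine le_antisymm (fun W hW => ?_) ?_
  · obtain ⟨S, hSx, hSc, hSW⟩ := mem_countableGenerate_iff.1 hW
    have hG : IsGδ (⋂₀ (interior '' S)) :=
      ⟨_, forall_mem_image.2 fun _ _ => isOpen_interior, hSc.image _, rfl⟩
    have hx : x ∈ ⋂₀ (interior '' S) :=
      mem_sInter.2 <| forall_mem_image.2 fun s hs => mem_interior_iff_mem_nhds.2 (hSx hs)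
    refine mem_of_superset (@IsOpen.mem_nhds _ (generateFrom _) _ _
      (isOpen_generateFrom_of_mem hG) hx) fun y hy => hSW ?_
    exact mem_sInter.2 fun s hs => interior_subset (mem_sInter.1 hy _ (mem_image_of_mem _ hs))
  · rw [nhds_generateFrom]
    refine le_iInf₂ fun s ⟨hxs, T, hTo, hTc, hsT⟩ => le_principal_iff.2 ?_
    subst hsT
    refine (countable_sInter_mem hTc).2 fun u hu => ?_
    exact mem_countableGenerate_iff.2 ⟨{u}, singleton_subset_iff.2
      ((hTo u hu).mem_nhds (mem_sInter.1 hxs u hu)), countable_singleton _, by simp⟩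

theorem countableInterFilter_nhds_gdeltaTopology (x : X) :
    @CountableInterFilter X (@nhds X (gdeltaTopology t) x) := by
  rw [nhds_gdeltaTopology]
  infer_instance

theorem tendsto_nhds_gdeltaTopology_iff {tY : TopologicalSpace Y} {l : Filter X}
    [CountableInterFilter l] {f : X → Y} {y : Y} :
    Tendsto f l (@nhds Y (gdeltaTopology tY) y) ↔ Tendsto f l (𝓝 y) := by
  rw [nhds_gdeltaTopology]
  exact le_countableGenerate_sets_iff

theorem continuous_gdeltaTopology {tY : TopologicalSpace Y} {f : X → Y} (hf : Continuous f) :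
    Continuous[gdeltaTopology t, gdeltaTopology tY] f := by
  refine @continuous_iff_continuousAt _ _ (gdeltaTopology t) (gdeltaTopology tY) _ |>.2 fun x => ?_
  have := countableInterFilter_nhds_gdeltaTopology t x
  refine tendsto_nhds_gdeltaTopology_iff.2 ?_
  rw [nhds_gdeltaTopology]
  exact (hf.tendsto x).mono_left (countableGenerate_sets_le _)

theorem isTopologicalGroup_gdeltaTopology {G : Type*} [Group G] [t : TopologicalSpace G]
    [IsTopologicalGroup G] : @IsTopologicalGroup G (gdeltaTopology t) _ := by
  refine @IsTopologicalGroup.mk G (gdeltaTopology t) _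
    (@ContinuousMul.mk G (gdeltaTopology t) _ ?_)
    (@ContinuousInv.mk G (gdeltaTopology t) _ (continuous_gdeltaTopology t continuous_inv))
  refine @continuous_iff_continuousAt _ _ (@instTopologicalSpaceProd G G (gdeltaTopology t)
    (gdeltaTopology t)) (gdeltaTopology t) _ |>.2 fun p => ?_
  change Tendsto _ _ _
  rw [@nhds_prod_eq _ _ (gdeltaTopology t) (gdeltaTopology t),
    nhds_gdeltaTopology, nhds_gdeltaTopology]
  refine tendsto_nhds_gdeltaTopology_iff.2 ?_
  have := (continuous_mul (M := G)).tendsto p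
  rw [nhds_prod_eq] at this
  exact this.mono_left (prod_mono (countableGenerate_sets_le _) (countableGenerate_sets_le _))

theorem induced_gdeltaTopology (f : Y → X) :
    (gdeltaTopology t).induced f = gdeltaTopology (t.induced f) := by
  refine @TopologicalSpace.ext_nhds _ _ _ fun y => ?_
  rw [@nhds_induced, nhds_gdeltaTopology, nhds_gdeltaTopology, @nhds_induced,
    comap_countableGenerate_sets]

end GDelta

section Raikov

variable {G : Type*} [Group G] [TopologicalSpace G]

def IsRaikovCauchy (F : Filter G) : Prop :=
  Tendsto (fun p : G × G => p.1 * p.2⁻¹) (F ×ˢ F) (𝓝 1) ∧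
    Tendsto (fun p : G × G => p.1⁻¹ * p.2) (F ×ˢ F) (𝓝 1)

theorem raikovComplete_iff :
    RaikovComplete G ↔ ∀ F : Filter G, F.NeBot → IsRaikovCauchy F → ∃ x, F ≤ 𝓝 x := by
  refine forall₂_congr fun F _ => imp_congr_left ⟨fun h => ⟨fun U hU => ?_, fun U hU => ?_⟩, ?_⟩
  · obtain ⟨S, hS, hSU⟩ := h U hU
    exact mem_prod_same_iff.2 ⟨S, hS, fun p hp => (hSU _ hp.1 _ hp.2).1⟩
  · obtain ⟨S, hS, hSU⟩ := h U hU
    exact mem_prod_same_iff.2 ⟨S, hS, fun p hp => (hSU _ hp.1 _ hp.2).2⟩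
  · rintro ⟨h₁, h₂⟩ U hU
    obtain ⟨S₁, hS₁, hS₁U⟩ := mem_prod_same_iff.1 (h₁ hU)
    obtain ⟨S₂, hS₂, hS₂U⟩ := mem_prod_same_iff.1 (h₂ hU)
    exact ⟨S₁ ∩ S₂, inter_mem hS₁ hS₂, fun x hx y hy =>
      ⟨hS₁U (mk_mem_prod hx.1 hy.1), hS₂U (mk_mem_prod hx.2 hy.2)⟩⟩

theorem IsRaikovCauchy.comap_subtype {F : Filter G} (hF : IsRaikovCauchy F) (H : Subgroup G) :
    IsRaikovCauchy (comap ((↑) : H → G) F) := by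
  refine ⟨?_, ?_⟩ <;> rw [nhds_subtype, tendsto_comap_iff, prod_comap_comap_eq]
  · exact hF.1.comp tendsto_comap
  · exact hF.2.comp tendsto_comap

theorem le_mul_nhds_one_inf_nhds_one_mul (F : Filter G) : F ≤ F * 𝓝 1 ⊓ 𝓝 1 * F :=
  le_inf
    (le_mul_iff.2 fun _ hs _ ht => mem_of_superset hs (subset_mul_left _ (mem_of_mem_nhds ht)))
    (le_mul_iff.2 fun _ ht _ hs => mem_of_superset hs (subset_mul_right _ (mem_of_mem_nhds ht)))

theorem IsRaikovCauchy.iInter_mem_of_mem_mul_nhds_one_inf_nhds_one_mul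
    [CountableInterFilter (𝓝 (1 : G))] {F : Filter G} [F.NeBot] (hF : IsRaikovCauchy F)
    {T : ℕ → Set G} (hT : ∀ n, T n ∈ F * 𝓝 1 ⊓ 𝓝 1 * F) : ⋂ n, T n ∈ F := by
  choose A hA B hB hTAB using fun n => mem_inf_iff.1 (hT n)
  choose S hS U hU hSU using fun n => Filter.mem_mul.1 (hA n)
  choose U' hU' S' hS' hUS' using fun n => Filter.mem_mul.1 (hB n)
  obtain ⟨R₁, hR₁, hR₁U'⟩ := mem_prod_same_iff.1 (hF.1 (countable_iInter_mem.2 hU'))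
  obtain ⟨R₂, hR₂, hR₂U⟩ := mem_prod_same_iff.1 (hF.2 (countable_iInter_mem.2 hU))
  refine mem_of_superset (inter_mem hR₁ hR₂) fun s hs => mem_iInter.2 fun n => hTAB n ▸ ⟨?_, ?_⟩
  · obtain ⟨r, hr, hrS⟩ := Filter.nonempty_of_mem (inter_mem hR₂ (hS n))
    exact hSU n ⟨r, hrS, r⁻¹ * s, mem_iInter.1 (hR₂U (mk_mem_prod hr hs.2)) n,
      mul_inv_cancel_left r s⟩
  · obtain ⟨r, hr, hrS⟩ := Filter.nonempty_of_mem (inter_mem hR₁ (hS' n))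
    exact hUS' n ⟨s * r⁻¹, mem_iInter.1 (hR₁U' (mk_mem_prod hs.1 hr)) n, r, hrS,
      inv_mul_cancel_right s r⟩

variable [IsTopologicalGroup G]

theorem IsRaikovCauchy.mul_nhds_one_inf_nhds_one_mul {F : Filter G} (hF : IsRaikovCauchy F) :
    IsRaikovCauchy (F * 𝓝 1 ⊓ 𝓝 1 * F) := by
  have hmul : ∀ f g : Filter G, f * g = map (fun q : G × G => q.1 * q.2) (f ×ˢ g) :=
    fun f g => (map_prod_eq_map₂ _ f g).symm
  refine ⟨Tendsto.mono_left ?_ (prod_mono inf_le_right inf_le_right),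
    Tendsto.mono_left ?_ (prod_mono inf_le_left inf_le_left)⟩
  · rw [hmul, prod_map_map_eq, tendsto_map'_iff]
    have h : Tendsto (fun q : (G × G) × G × G => q.1.1 * (q.1.2 * q.2.2⁻¹) * q.2.1⁻¹)
        ((𝓝 1 ×ˢ F) ×ˢ (𝓝 1 ×ˢ F)) (𝓝 (1 * 1 * 1⁻¹)) :=
      ((tendsto_fst.comp tendsto_fst).mul
        (hF.1.comp ((tendsto_snd.comp tendsto_fst).prodMk (tendsto_snd.comp tendsto_snd)))).mul
        (tendsto_fst.comp tendsto_snd).inv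
    simpa [Function.comp_def, mul_assoc] using h
  · rw [hmul, prod_map_map_eq, tendsto_map'_iff]
    have h : Tendsto (fun q : (G × G) × G × G => q.1.2⁻¹ * (q.1.1⁻¹ * q.2.1) * q.2.2)
        ((F ×ˢ 𝓝 1) ×ˢ (F ×ˢ 𝓝 1)) (𝓝 (1⁻¹ * 1 * 1)) :=
      ((tendsto_snd.comp tendsto_fst).inv.mul
        (hF.2.comp ((tendsto_fst.comp tendsto_fst).prodMk (tendsto_fst.comp tendsto_snd)))).mul
        (tendsto_snd.comp tendsto_snd)
    simpa [Function.comp_def, mul_assoc] using h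

theorem IsRaikovCauchy.le_nhds_of_clusterPt {F : Filter G} {x : G} (hF : IsRaikovCauchy F)
    (hx : ClusterPt x F) : F ≤ 𝓝 x := by
  have : (𝓝 x ⊓ F).NeBot := hx
  have h : Tendsto (fun p : G × G => p.1 * (p.1⁻¹ * p.2)) ((𝓝 x ⊓ F) ×ˢ F) (𝓝 (x * 1)) :=
    (tendsto_fst.mono_right inf_le_left).mul
      (hF.2.mono_left (prod_mono inf_le_right le_rfl))
  rw [← map_snd_prod (𝓝 x ⊓ F) F]
  simp only [mul_inv_cancel_left, mul_one] at h
  exact h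

theorem raikovComplete_of_forall_exists_mem_subgroup [CountableInterFilter (𝓝 (1 : G))]
    (H : ℕ → Subgroup G) (hH : ∀ n, RaikovComplete (H n)) (hcov : ∀ x : G, ∃ n, x ∈ H n) :
    RaikovComplete G := by
  refine raikovComplete_iff.2 fun F _ hF => ?_
  set F' := F * 𝓝 1 ⊓ 𝓝 1 * F
  have hF' : IsRaikovCauchy F' := hF.mul_nhds_one_inf_nhds_one_mul
  obtain ⟨n, hn⟩ : ∃ n, (F' ⊓ 𝓟 (H n : Set G)).NeBot := by
    by_contra! h
    have hmem : ⋂ n, (H n : Set G)ᶜ ∈ F := hF.iInter_mem_of_mem_mul_nhds_one_inf_nhds_one_mul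
      fun n => inf_principal_eq_bot.1 (h n)
    have hempty : ⋂ n, (H n : Set G)ᶜ = ∅ :=
      iInter_eq_empty_iff.2 fun x => (hcov x).imp fun _ hx hx' => hx' hx
    exact empty_notMem F (hempty ▸ hmem)
  rw [← subtype_coe_map_comap] at hn
  obtain ⟨h, hh⟩ :=
    raikovComplete_iff.1 (hH n) _ ((map_neBot_iff _).1 hn) (hF'.comap_subtype (H n))
  have hcluster : ClusterPt (h : G) F' :=
    hn.mono (le_inf ((map_mono hh).trans continuous_subtype_val.continuousAt) map_comap_le)
  exact ⟨h, (le_mul_nhds_one_inf_nhds_one_mul F).trans (hF'.le_nhds_of_clusterPt hcluster)⟩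

end Raikov

/-- A topological group which is the union of countably many
`G_δ`-complete subgroups is itself `G_δ`-complete. -/
theorem stmt12 {G : Type*} [Group G] [TopologicalSpace G] [IsTopologicalGroup G]
    (H : ℕ → Subgroup G) (hc : ∀ n, GDeltaComplete (H n))
    (hcov : ∀ x : G, ∃ n, x ∈ H n) :
    GDeltaComplete G := by
  have hP := countableInterFilter_nhds_gdeltaTopology ‹TopologicalSpace G› 1
  refine @raikovComplete_of_forall_exists_mem_subgroup G _ (gdeltaTopology _)
    isTopologicalGroup_gdeltaTopology hP H (fun n => ?_) hcov
  have hn := hc n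
  rwa [GDeltaComplete, instTopologicalSpaceSubtype, ← induced_gdeltaTopology] at hn
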